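/- Let 1 < p ≤ 2 and let φ: (0,∞)×ℝⁿ → ℂ satisfy φ, ∂_tφ ∈ T^p. Then for every t > 0, ‖φ(t,·)‖_{L^p(ℝⁿ)}^p ≲ t^{-p/2} ‖φ‖_{T^p}^p + t^{p/2} ‖∂_tφ‖_{T^p}^p, with implicit constant depending only on p and n. -/

import Mathlib

/-!
Average `‖φ(t,·)‖ᵖ` over the balls `B(x, √t/2)` and pass to the square by Jensen, since
`p/2 ≤ 1`. For each `y`, the fundamental theorem of calculus and Cauchy–Schwarz give
`‖φ(t,y)‖² ≲ t⁻¹ ∫_{t/4}^{t/2} ‖φ(τ,y)‖² dτ + t ∫_{t/4}^t ‖ψ(s,y)‖² ds`. For `τ ∈ (t/4, t]` the ball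
`B(x, √t/2)` lies in `B(x, √τ)` and has comparable volume, so the average of the right-hand
side over `B(x, √t/2)` is controlled by the cone integrals of `φ` and `ψ` at `x`. Raising to the
power `p/2 ≤ 1` splits the sum, and integrating in `x` gives the tent-space norms.
-/

open MeasureTheory Set ENNReal

/-- The conical (tent space) square function norm `‖g‖_{T^p}`. -/
noncomputable def Tnorm (n : ℕ) (p : ℝ)
    (g : ℝ → EuclideanSpace ℝ (Fin n) → ℝ≥0∞) : ℝ≥0∞ :=
  (∫⁻ x, (∫⁻ t in Ioi (0 : ℝ),
      (volume (Metric.ball x (Real.sqrt t)))⁻¹ *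
        ∫⁻ y in Metric.ball x (Real.sqrt t), (g t y) ^ 2) ^ (p / 2)) ^ (1 / p)

open Measure Metric Module

section Averages

variable {α : Type*} [MeasurableSpace α] {μ : Measure α} {f g : α → ℝ≥0∞}

theorem laverage_add_right (hg : AEMeasurable g μ) :
    ⨍⁻ x, f x + g x ∂μ = ⨍⁻ x, f x ∂μ + ⨍⁻ x, g x ∂μ :=
  lintegral_add_right' _ (hg.smul_measure _)

theorem laverage_const_mul {c : ℝ≥0∞} (hc : c ≠ ∞) :
    ⨍⁻ x, c * f x ∂μ = c * ⨍⁻ x, f x ∂μ :=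
  lintegral_const_mul' _ _ hc

variable [IsFiniteMeasure μ]

theorem laverage_rpow_rpow_inv_le [NeZero μ] (hf : AEMeasurable f μ) {p q : ℝ} (hp : 0 < p)
    (hpq : p ≤ q) : (⨍⁻ x, f x ^ p ∂μ) ^ p⁻¹ ≤ (⨍⁻ x, f x ^ q ∂μ) ^ q⁻¹ := by
  have h := eLpNorm'_le_eLpNorm'_of_exponent_le hp hpq ((μ univ)⁻¹ • μ)
    (hf.smul_measure _).aestronglyMeasurable
  simpa only [eLpNorm'_eq_lintegral_enorm, enorm_eq_self, one_div, laverage_eq'] using h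

theorem laverage_rpow_le_rpow_laverage [NeZero μ] (hf : AEMeasurable f μ) {θ : ℝ}
    (hθ0 : 0 < θ) (hθ1 : θ ≤ 1) : ⨍⁻ x, f x ^ θ ∂μ ≤ (⨍⁻ x, f x ∂μ) ^ θ := by
  have h := laverage_rpow_rpow_inv_le hf hθ0 hθ1
  rw [rpow_inv_le_iff hθ0, inv_one, rpow_one] at h
  simpa only [rpow_one] using h

theorem sq_lintegral_le_measure_univ_mul (hf : AEMeasurable f μ) :
    (∫⁻ x, f x ∂μ) ^ 2 ≤ μ univ * ∫⁻ x, f x ^ 2 ∂μ := by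
  rcases eq_zero_or_neZero μ with rfl | _
  · simp
  have h := laverage_rpow_rpow_inv_le hf one_pos one_le_two
  rw [inv_one, rpow_one, le_rpow_inv_iff two_pos] at h
  simp only [rpow_one, rpow_two] at h
  rw [← measure_mul_laverage, ← measure_mul_laverage, mul_pow, sq (μ univ), mul_assoc]
  gcongr

end Averages

theorem enorm_sq_le_setLAverage_add {F : Type*} [NormedAddCommGroup F] [NormedSpace ℝ F]
    {f g : ℝ → F} {a b c : ℝ} (hab : a < b) (hbc : b ≤ c)
    (hg : AEStronglyMeasurable g (volume.restrict (Ioc a c)))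
    (hfg : ∀ τ ∈ Ioc a b, f c - f τ = ∫ s in τ..c, g s) :
    ‖f c‖ₑ ^ 2 ≤ 2 * ⨍⁻ τ in Ioc a b, ‖f τ‖ₑ ^ 2 ∂volume
      + 2 * ENNReal.ofReal (c - a) * ∫⁻ s in Ioc a c, ‖g s‖ₑ ^ 2 := by
  set I := ∫⁻ s in Ioc a c, ‖g s‖ₑ
  have hdiff : ∀ τ ∈ Ioc a b, ‖f c‖ₑ ≤ ‖f τ‖ₑ + I := fun τ hτ =>
    calc ‖f c‖ₑ = ‖f τ + (f c - f τ)‖ₑ := by rw [add_sub_cancel]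
      _ ≤ ‖f τ‖ₑ + ‖∫ s in Ioc τ c, g s‖ₑ := by
        rw [hfg τ hτ, intervalIntegral.integral_of_le (hτ.2.trans hbc)]
        exact enorm_add_le _ _
      _ ≤ ‖f τ‖ₑ + I := by
        gcongr
        exact (enorm_integral_le_lintegral_enorm _).trans
          (lintegral_mono_set (Ioc_subset_Ioc_left hτ.1.le))
  have hsq : ∀ τ ∈ Ioc a b, ‖f c‖ₑ ^ 2 ≤ 2 * ‖f τ‖ₑ ^ 2 + 2 * I ^ 2 := fun τ hτ => by
    have h := rpow_add_le_mul_rpow_add_rpow ‖f τ‖ₑ I (one_le_two (α := ℝ))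
    norm_num [rpow_two, mul_add] at h
    exact (pow_le_pow_left₀ zero_le (hdiff τ hτ) 2).trans h
  have hs0 : volume (Ioc a b) ≠ 0 := by simp [hab]
  have hs : volume (Ioc a b) ≠ ∞ := measure_Ioc_lt_top.ne
  have hCS : I ^ 2 ≤ ENNReal.ofReal (c - a) * ∫⁻ s in Ioc a c, ‖g s‖ₑ ^ 2 := by
    have := sq_lintegral_le_measure_univ_mul (μ := volume.restrict (Ioc a c)) hg.enorm
    rwa [restrict_apply_univ, Real.volume_Ioc] at this
  calc ‖f c‖ₑ ^ 2 = ⨍⁻ _ in Ioc a b, ‖f c‖ₑ ^ 2 ∂volume := (setLAverage_const hs0 hs _).symm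
    _ ≤ ⨍⁻ τ in Ioc a b, (2 * ‖f τ‖ₑ ^ 2 + 2 * I ^ 2) ∂volume :=
      laverage_mono_ae ((ae_restrict_mem measurableSet_Ioc).mono hsq)
    _ = 2 * ⨍⁻ τ in Ioc a b, ‖f τ‖ₑ ^ 2 ∂volume + 2 * I ^ 2 := by
      rw [laverage_add_right aemeasurable_const, laverage_const_mul ofNat_ne_top,
        setLAverage_const hs0 hs]
    _ ≤ _ := by rw [mul_assoc]; gcongr

theorem Measurable.setLIntegral_ball {α E : Type*} [MeasurableSpace α] [PseudoMetricSpace E]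
    [SecondCountableTopology E] [MeasurableSpace E] [BorelSpace E] {μ : Measure E} [SFinite μ]
    {f : α → E → ℝ≥0∞} (hf : Measurable (Function.uncurry f)) {c : α → E} (hc : Measurable c)
    {r : α → ℝ} (hr : Measurable r) :
    Measurable fun a => ∫⁻ y in ball (c a) (r a), f a y ∂μ := by
  simp_rw [← lintegral_indicator measurableSet_ball]
  refine Measurable.lintegral_prod_right'
    (f := fun q : α × E => (ball (c q.1) (r q.1)).indicator (f q.1) q.2) ?_
  exact hf.indicator
    (measurableSet_lt (measurable_snd.dist (hc.comp measurable_fst)) (hr.comp measurable_fst))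

section ConeIntegral

variable {E : Type*} [PseudoMetricSpace E] [MeasurableSpace E]

/-- The square of the conical square function `𝒜g(x)` of tent-space theory. -/
noncomputable def coneIntegral (μ : Measure E) (g : ℝ → E → ℝ≥0∞) (x : E) : ℝ≥0∞ :=
  ∫⁻ t in Ioi 0, ⨍⁻ y in ball x (√t), g t y ^ 2 ∂μ

theorem measurable_coneIntegral [SecondCountableTopology E] [BorelSpace E] {μ : Measure E}
    [SFinite μ] {g : ℝ → E → ℝ≥0∞} (hg : Measurable (Function.uncurry g)) :
    Measurable (coneIntegral μ g) := by
  have hnum := Measurable.setLIntegral_ball (μ := μ) (f := fun q : E × ℝ => fun y => g q.2 y ^ 2)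
    ((hg.comp (measurable_fst.snd.prodMk measurable_snd)).pow_const 2) measurable_fst
    measurable_snd.sqrt
  have hden : Measurable fun q : E × ℝ => μ (ball q.1 √q.2) := by
    simpa only [setLIntegral_one] using Measurable.setLIntegral_ball (μ := μ)
      (f := fun _ _ => 1) measurable_const measurable_fst measurable_snd.sqrt
  unfold coneIntegral
  simp only [setLAverage_eq]
  exact (hnum.div hden).lintegral_prod_right'

theorem Tnorm_rpow {n : ℕ} {p : ℝ} (hp : p ≠ 0) (g : ℝ → EuclideanSpace ℝ (Fin n) → ℝ≥0∞) :
    Tnorm n p g ^ p = ∫⁻ x, coneIntegral volume g x ^ (p / 2) := by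
  simp only [Tnorm, coneIntegral, setLAverage_eq, ENNReal.div_eq_inv_mul]
  rw [← rpow_mul, one_div_mul_cancel hp, rpow_one]

end ConeIntegral

section HaarBalls

variable {E : Type*} [NormedAddCommGroup E] [NormedSpace ℝ E] [FiniteDimensional ℝ E]
  [MeasurableSpace E] [BorelSpace E] (μ : Measure E) [μ.IsAddHaarMeasure]

theorem lintegral_setLAverage_ball {f : E → ℝ≥0∞} (hf : Measurable f) {r : ℝ} (hr : 0 < r) :
    ∫⁻ x, ⨍⁻ y in ball x r, f y ∂μ ∂μ = ∫⁻ y, f y ∂μ := by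
  set c := μ (ball (0 : E) r)
  have hc0 : c ≠ 0 := (measure_ball_pos μ 0 hr).ne'
  have hc : c ≠ ∞ := measure_ball_lt_top.ne
  have hmeas : Measurable (Function.uncurry fun x y => (ball x r).indicator f y) :=
    (hf.comp measurable_snd).indicator
      (measurableSet_lt (measurable_snd.dist measurable_fst) measurable_const)
  calc ∫⁻ x, ⨍⁻ y in ball x r, f y ∂μ ∂μ
      = (∫⁻ x, ∫⁻ y, (ball x r).indicator f y ∂μ ∂μ) * c⁻¹ := by
        simp_rw [setLAverage_eq, addHaar_ball_center μ _ r, div_eq_mul_inv,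
          lintegral_indicator measurableSet_ball]
        exact lintegral_mul_const' _ _ (inv_ne_top.2 hc0)
    _ = (∫⁻ y, ∫⁻ x, (ball y r).indicator (fun _ => f y) x ∂μ ∂μ) * c⁻¹ := by
        rw [lintegral_lintegral_swap hmeas.aemeasurable]
        simp only [indicator, mem_ball, dist_comm]
    _ = ∫⁻ y, f y ∂μ := by
        simp_rw [lintegral_indicator_const measurableSet_ball, addHaar_ball_center μ _ r]
        rw [lintegral_mul_const' _ _ hc, mul_assoc, ENNReal.mul_inv_cancel hc0 hc, mul_one]

theorem setLAverage_ball_le_of_le_two_mul (f : E → ℝ≥0∞) (x : E) {r R : ℝ} (hrR : r ≤ R)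
    (hR : R ≤ 2 * r) :
    ⨍⁻ y in ball x r, f y ∂μ ≤ 2 ^ finrank ℝ E * ⨍⁻ y in ball x R, f y ∂μ := by
  have hdouble : μ (ball x (2 * r)) = 2 ^ finrank ℝ E * μ (ball x r) := by
    rw [addHaar_ball_mul_of_pos μ x two_pos, ← addHaar_ball_center μ x r,
      ofReal_pow zero_le_two, ofReal_ofNat]
  have hvol : μ (ball x R) ≤ 2 ^ finrank ℝ E * μ (ball x r) :=
    hdouble ▸ measure_mono (ball_subset_ball hR)
  have hk0 : (2 : ℝ≥0∞) ^ finrank ℝ E ≠ 0 := by positivity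
  have hk : (2 : ℝ≥0∞) ^ finrank ℝ E ≠ ∞ := by finiteness
  have hinv : (μ (ball x r))⁻¹ ≤ 2 ^ finrank ℝ E * (μ (ball x R))⁻¹ :=
    calc (μ (ball x r))⁻¹ = 2 ^ finrank ℝ E * (2 ^ finrank ℝ E * μ (ball x r))⁻¹ := by
          rw [ENNReal.mul_inv (.inl hk0) (.inl hk), ← mul_assoc,
            ENNReal.mul_inv_cancel hk0 hk, one_mul]
      _ ≤ 2 ^ finrank ℝ E * (μ (ball x R))⁻¹ := by gcongr
  rw [setLAverage_eq, setLAverage_eq, ENNReal.div_eq_inv_mul, ENNReal.div_eq_inv_mul,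
    ← mul_assoc]
  exact mul_le_mul' hinv (lintegral_mono_set (ball_subset_ball hrR))

theorem setLAverage_ball_setLIntegral_le_coneIntegral {g : ℝ → E → ℝ≥0∞}
    (hg : Measurable (Function.uncurry g)) {t b : ℝ} (ht : 0 ≤ t) (hb : b ≤ t) (x : E) :
    ⨍⁻ y in ball x (√t / 2), (∫⁻ τ in Ioc (t / 4) b, g τ y ^ 2) ∂μ
      ≤ 2 ^ finrank ℝ E * coneIntegral μ g x := by
  have hswap : ⨍⁻ y in ball x (√t / 2), (∫⁻ τ in Ioc (t / 4) b, g τ y ^ 2) ∂μ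
      = ∫⁻ τ in Ioc (t / 4) b, ⨍⁻ y in ball x (√t / 2), g τ y ^ 2 ∂μ :=
    lintegral_lintegral_swap ((hg.comp measurable_swap).pow_const 2).aemeasurable
  have hradius : ∀ τ ∈ Ioc (t / 4) b, √t / 2 ≤ √τ ∧ √τ ≤ 2 * (√t / 2) := fun τ hτ =>
    ⟨(Real.le_sqrt (by positivity) (by linarith [hτ.1])).2
        (by rw [div_pow, Real.sq_sqrt ht]; linarith [hτ.1]),
      by rw [mul_div_cancel₀ _ two_ne_zero]; exact Real.sqrt_le_sqrt (hτ.2.trans hb)⟩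
  calc ⨍⁻ y in ball x (√t / 2), (∫⁻ τ in Ioc (t / 4) b, g τ y ^ 2) ∂μ
      ≤ ∫⁻ τ in Ioc (t / 4) b, 2 ^ finrank ℝ E * ⨍⁻ y in ball x √τ, g τ y ^ 2 ∂μ := by
        rw [hswap]
        exact setLIntegral_mono' measurableSet_Ioc fun τ hτ =>
          setLAverage_ball_le_of_le_two_mul μ _ x (hradius τ hτ).1 (hradius τ hτ).2
    _ = 2 ^ finrank ℝ E * ∫⁻ τ in Ioc (t / 4) b, ⨍⁻ y in ball x √τ, g τ y ^ 2 ∂μ :=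
        lintegral_const_mul' _ _ (by finiteness)
    _ ≤ 2 ^ finrank ℝ E * coneIntegral μ g x := by
        gcongr
        exact lintegral_mono_set fun τ hτ => (by positivity : 0 ≤ t / 4).trans_lt hτ.1

variable {F : Type*} [NormedAddCommGroup F] [NormedSpace ℝ F] [MeasurableSpace F] [BorelSpace F]
  [SecondCountableTopology F] {φ ψ : ℝ → E → F}

theorem setLAverage_ball_enorm_sq_le (hφ : Measurable (Function.uncurry φ))
    (hψ : Measurable (Function.uncurry ψ))
    (hφψ : ∀ y (τ t : ℝ), 0 < τ → τ ≤ t → φ t y - φ τ y = ∫ s in τ..t, ψ s y)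
    {t : ℝ} (ht : 0 < t) (x : E) :
    ⨍⁻ y in ball x (√t / 2), ‖φ t y‖ₑ ^ 2 ∂μ
      ≤ 2 ^ (finrank ℝ E + 3) * ((ENNReal.ofReal t)⁻¹ * coneIntegral μ (fun s y => ‖φ s y‖ₑ) x
        + ENNReal.ofReal t * coneIntegral μ (fun s y => ‖ψ s y‖ₑ) x) := by
  set T := ENNReal.ofReal t
  have hT0 : T ≠ 0 := (ofReal_pos.2 ht).ne'
  set Sφ := coneIntegral μ (fun s y => ‖φ s y‖ₑ) x
  set Sψ := coneIntegral μ (fun s y => ‖ψ s y‖ₑ) x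
  set Φ := fun y => ∫⁻ τ in Ioc (t / 4) (t / 2), ‖φ τ y‖ₑ ^ 2
  set Ψ := fun y => ∫⁻ s in Ioc (t / 4) t, ‖ψ s y‖ₑ ^ 2
  have hpt : ∀ y, ‖φ t y‖ₑ ^ 2 ≤ 8 * T⁻¹ * Φ y + 2 * T * Ψ y := fun y => by
    have h := enorm_sq_le_setLAverage_add (f := fun s => φ s y) (g := fun s => ψ s y)
      (a := t / 4) (b := t / 2) (c := t) (by linarith) (by linarith)
      (hψ.comp measurable_prodMk_right).aestronglyMeasurable
      fun τ hτ => hφψ y τ t (by linarith [hτ.1]) (by linarith [hτ.2])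
    have hlen : ENNReal.ofReal (t / 2 - t / 4) = T / 4 := by
      rw [show t / 2 - t / 4 = t / 4 by ring, ofReal_div_of_pos four_pos, ofReal_ofNat]
    rw [setLAverage_eq, Real.volume_Ioc, hlen] at h
    refine h.trans (add_le_add (le_of_eq ?_) ?_)
    · rw [ENNReal.div_eq_inv_mul, ENNReal.inv_div (.inr ofReal_ne_top) (.inr hT0),
        ENNReal.div_eq_inv_mul]
      ring
    · gcongr
      exact ofReal_le_ofReal (by linarith)
  have hΨ : Measurable Ψ := (hψ.enorm.pow_const 2).lintegral_prod_left'
  calc ⨍⁻ y in ball x (√t / 2), ‖φ t y‖ₑ ^ 2 ∂μ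
      ≤ ⨍⁻ y in ball x (√t / 2), (8 * T⁻¹ * Φ y + 2 * T * Ψ y) ∂μ :=
        laverage_mono_ae (.of_forall hpt)
    _ = 8 * T⁻¹ * ⨍⁻ y in ball x (√t / 2), Φ y ∂μ + 2 * T * ⨍⁻ y in ball x (√t / 2), Ψ y ∂μ := by
        rw [laverage_add_right (hΨ.const_mul _).aemeasurable, laverage_const_mul (by finiteness),
          laverage_const_mul (by finiteness)]
    _ ≤ 8 * T⁻¹ * (2 ^ finrank ℝ E * Sφ) + 2 * T * (2 ^ finrank ℝ E * Sψ) := by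
        gcongr
        · exact setLAverage_ball_setLIntegral_le_coneIntegral μ
            (g := fun s y => ‖φ s y‖ₑ) hφ.enorm ht.le (by linarith) x
        · exact setLAverage_ball_setLIntegral_le_coneIntegral μ
            (g := fun s y => ‖ψ s y‖ₑ) hψ.enorm ht.le le_rfl x
    _ = 2 ^ finrank ℝ E * 8 * (T⁻¹ * Sφ) + 2 ^ finrank ℝ E * 2 * (T * Sψ) := by ring
    _ ≤ 2 ^ finrank ℝ E * 8 * (T⁻¹ * Sφ) + 2 ^ finrank ℝ E * 8 * (T * Sψ) := by
        gcongr
        norm_num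
    _ = 2 ^ (finrank ℝ E + 3) * (T⁻¹ * Sφ + T * Sψ) := by ring

theorem setLAverage_ball_enorm_rpow_le (hφ : Measurable (Function.uncurry φ))
    (hψ : Measurable (Function.uncurry ψ))
    (hφψ : ∀ y (τ t : ℝ), 0 < τ → τ ≤ t → φ t y - φ τ y = ∫ s in τ..t, ψ s y)
    {t : ℝ} (ht : 0 < t) {p : ℝ} (hp : 0 < p) (hp2 : p ≤ 2) (x : E) :
    ⨍⁻ y in ball x (√t / 2), ‖φ t y‖ₑ ^ p ∂μ
      ≤ 2 ^ (finrank ℝ E + 3) *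
        (ENNReal.ofReal t ^ (-(p / 2)) * coneIntegral μ (fun s y => ‖φ s y‖ₑ) x ^ (p / 2)
          + ENNReal.ofReal t ^ (p / 2) * coneIntegral μ (fun s y => ‖ψ s y‖ₑ) x ^ (p / 2)) := by
  have hp0 : 0 ≤ p / 2 := by positivity
  have : IsFiniteMeasure (μ.restrict (ball x (√t / 2))) :=
    isFiniteMeasure_restrict.2 measure_ball_lt_top.ne
  have : NeZero (μ.restrict (ball x (√t / 2))) :=
    ⟨by simpa using (measure_ball_pos μ x (by positivity)).ne'⟩
  set K : ℝ≥0∞ := 2 ^ (finrank ℝ E + 3)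
  have hK : K ^ (p / 2) ≤ K :=
    (rpow_le_rpow_of_exponent_le (one_le_pow₀ one_le_two) (by linarith)).trans_eq (rpow_one K)
  calc ⨍⁻ y in ball x (√t / 2), ‖φ t y‖ₑ ^ p ∂μ
      = ⨍⁻ y in ball x (√t / 2), (‖φ t y‖ₑ ^ 2) ^ (p / 2) ∂μ := by
        simp_rw [← rpow_two, ← rpow_mul, mul_div_cancel₀ p two_ne_zero]
    _ ≤ (⨍⁻ y in ball x (√t / 2), ‖φ t y‖ₑ ^ 2 ∂μ) ^ (p / 2) :=
        laverage_rpow_le_rpow_laverage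
          ((hφ.comp measurable_prodMk_left).enorm.pow_const 2).aemeasurable
          (by positivity) (by linarith)
    _ ≤ (K * ((ENNReal.ofReal t)⁻¹ * coneIntegral μ (fun s y => ‖φ s y‖ₑ) x
        + ENNReal.ofReal t * coneIntegral μ (fun s y => ‖ψ s y‖ₑ) x)) ^ (p / 2) := by
        gcongr
        exact setLAverage_ball_enorm_sq_le μ hφ hψ hφψ ht x
    _ ≤ K * (((ENNReal.ofReal t)⁻¹ * coneIntegral μ (fun s y => ‖φ s y‖ₑ) x) ^ (p / 2)
        + (ENNReal.ofReal t * coneIntegral μ (fun s y => ‖ψ s y‖ₑ) x) ^ (p / 2)) := by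
        rw [mul_rpow_of_nonneg _ _ hp0]
        exact mul_le_mul' hK (rpow_add_le_add_rpow _ _ hp0 (by linarith))
    _ = _ := by
        rw [mul_rpow_of_nonneg _ _ hp0, mul_rpow_of_nonneg _ _ hp0, inv_rpow, ← rpow_neg]

end HaarBalls

/-- for `1 < p ≤ 2` and `φ, ∂_tφ ∈ T^p`, one has for every `t > 0`
`‖φ(t,·)‖_{L^p}^p ≤ C (t^{-p/2} ‖φ‖_{T^p}^p + t^{p/2} ‖∂_tφ‖_{T^p}^p)`,
with `C` depending only on `p` and `n`. -/
theorem stmt4 (n : ℕ) (p : ℝ) (hp : 1 < p) (hp2 : p ≤ 2) :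
    ∃ C : ℝ≥0∞, 0 < C ∧ C < ⊤ ∧
      ∀ (φ ψ : ℝ → EuclideanSpace ℝ (Fin n) → ℂ),
        Measurable (Function.uncurry φ) → Measurable (Function.uncurry ψ) →
        (∀ x (τ t : ℝ), 0 < τ → τ ≤ t →
          φ t x - φ τ x = ∫ s in τ..t, ψ s x) →
        Tnorm n p (fun t x => (‖φ t x‖₊ : ℝ≥0∞)) < ⊤ →
        Tnorm n p (fun t x => (‖ψ t x‖₊ : ℝ≥0∞)) < ⊤ →
        ∀ t : ℝ, 0 < t →
          eLpNorm (φ t) (ENNReal.ofReal p) volume ^ p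
            ≤ C * (ENNReal.ofReal t ^ (-(p / 2)) *
                    Tnorm n p (fun s x => (‖φ s x‖₊ : ℝ≥0∞)) ^ p
                 + ENNReal.ofReal t ^ (p / 2) *
                    Tnorm n p (fun s x => (‖ψ s x‖₊ : ℝ≥0∞)) ^ p) := by
  have hp0 : 0 < p := one_pos.trans hp
  refine ⟨2 ^ (n + 3), by positivity, by finiteness, fun φ ψ hφ hψ hφψ _ _ t ht => ?_⟩
  have hbound := setLAverage_ball_enorm_rpow_le volume hφ hψ hφψ ht hp0 hp2
  rw [finrank_euclideanSpace_fin] at hbound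
  have hS := measurable_coneIntegral (μ := volume) (g := fun s y => ‖φ s y‖ₑ) hφ.enorm
  calc eLpNorm (φ t) (ENNReal.ofReal p) volume ^ p
      = ∫⁻ y, ‖φ t y‖ₑ ^ p := by
        have h := eLpNorm_nnreal_pow_eq_lintegral (f := φ t) (μ := volume) (p := p.toNNReal)
          (by simpa using hp0)
        rwa [Real.coe_toNNReal _ hp0.le] at h
    _ = ∫⁻ x, ⨍⁻ y in ball x (√t / 2), ‖φ t y‖ₑ ^ p ∂volume :=
        (lintegral_setLAverage_ball volume
          ((hφ.comp measurable_prodMk_left).enorm.pow_const p) (by positivity)).symm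
    _ ≤ _ := lintegral_mono hbound
    _ = _ := by
        rw [lintegral_const_mul' _ _ (by finiteness),
          lintegral_add_left ((hS.pow_const _).const_mul _),
          lintegral_const_mul' _ _ (by finiteness), lintegral_const_mul' _ _ (by finiteness),
          Tnorm_rpow hp0.ne', Tnorm_rpow hp0.ne']
        rfl -- `‖z‖ₑ` is by definition `(‖z‖₊ : ℝ≥0∞)`
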